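/- arXiv:1105.1567 — 2 statements merged into one kernel-verified Lean document; each statement's English description precedes it below -/
import Mathlib

section
/- If G₁ and G₂ are connected graphs, each with at least one edge, and both are bipartite, then the Kronecker product G₁ × G₂ is disconnected. -/
open SimpleGraph

/-- The Kronecker (tensor) product of two simple graphs. -/
def tensorProd {α β : Type*} (G : SimpleGraph α) (H : SimpleGraph β) : SimpleGraph (α × β) where
  Adj p q := G.Adj p.1 q.1 ∧ H.Adj p.2 q.2
  symm := ⟨fun p q h => ⟨G.adj_symm h.1, H.adj_symm h.2⟩⟩
  loopless := ⟨fun p h => G.irrefl h.1⟩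

instance {α β : Type*} (G : SimpleGraph α) (H : SimpleGraph β)
    [DecidableRel G.Adj] [DecidableRel H.Adj] : DecidableRel (tensorProd G H).Adj :=
  fun _ _ => instDecidableAnd

/-- `S` is a separating set of `G`: deleting `S` leaves a single vertex or a
disconnected (possibly empty) graph. -/
def IsSeparating {V : Type*} (G : SimpleGraph V) (S : Set V) : Prop :=
  Sᶜ.ncard = 1 ∨ ¬ (G.induce Sᶜ).Connected

/-- The vertex connectivity `κ(G)`: the minimum cardinality of a separating set. -/
noncomputable def kappa {V : Type*} [Fintype V] (G : SimpleGraph V) : ℕ :=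
  sInf {k | ∃ S : Set V, IsSeparating G S ∧ S.ncard = k}

/-- A graph is super-connected (super-κ) if every minimum separating set is the
neighborhood of some vertex. -/
def SuperK {V : Type*} [Fintype V] (G : SimpleGraph V) : Prop :=
  ∀ S : Set V, IsSeparating G S → S.ncard = kappa G → ∃ v, S = G.neighborSet v

/-!
A walk in `G₁ × G₂` projects to walks of the same length in both factors. A walk from `(a, y)`
to `(b, y)` with `a ~ b` would therefore give a closed walk at `y` in `G₂`, of even length since
`G₂` is bipartite, and a walk from `a` to `b` in `G₁` of the same length, which is odd since
`G₁` is bipartite and `a ~ b`.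
-/

namespace SimpleGraph

variable {α β : Type*} {G : SimpleGraph α} {H : SimpleGraph β}

def tensorProdFst : tensorProd G H →g G := ⟨Prod.fst, And.left⟩

def tensorProdSnd : tensorProd G H →g H := ⟨Prod.snd, And.right⟩

lemma Colorable.odd_length_of_adj (hG : G.Colorable 2) {a b : α} (hab : G.Adj a b)
    (p : G.Walk a b) : Odd p.length := by
  have heven := two_colorable_iff_forall_loop_even.mp hG a (p.concat hab.symm)
  rwa [Walk.length_concat, Nat.even_add_one, Nat.not_even_iff_odd] at heven

lemma not_reachable_tensorProd_of_adj (hG : G.Colorable 2) (hH : H.Colorable 2) {a b : α}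
    (hab : G.Adj a b) (y : β) : ¬ (tensorProd G H).Reachable (a, y) (b, y) := by
  rintro ⟨p⟩
  have hodd : Odd p.length := p.length_map tensorProdFst ▸ hG.odd_length_of_adj hab _
  have heven : Even p.length :=
    p.length_map tensorProdSnd ▸ two_colorable_iff_forall_loop_even.mp hH y _
  exact Nat.not_even_iff_odd.mpr hodd heven

end SimpleGraph

theorem stmt5_general {α β : Type*}
    (G₁ : SimpleGraph α) (G₂ : SimpleGraph β)
    (he₁ : G₁.edgeSet.Nonempty) (he₂ : G₂.edgeSet.Nonempty)
    (hb₁ : G₁.Colorable 2) (hb₂ : G₂.Colorable 2) :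
    ¬ (tensorProd G₁ G₂).Connected := by
  obtain ⟨⟨a, b⟩, hab⟩ := he₁
  obtain ⟨⟨y, _⟩, _⟩ := he₂
  exact fun hconn => not_reachable_tensorProd_of_adj hb₁ hb₂ hab y (hconn (a, y) (b, y))

theorem stmt5 {α β : Type*} [Fintype α] [Fintype β]
    (G₁ : SimpleGraph α) (G₂ : SimpleGraph β)
    (h₁ : G₁.Connected) (h₂ : G₂.Connected)
    (he₁ : G₁.edgeSet.Nonempty) (he₂ : G₂.edgeSet.Nonempty)
    (hb₁ : G₁.Colorable 2) (hb₂ : G₂.Colorable 2) :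
    ¬ (tensorProd G₁ G₂).Connected :=
  stmt5_general G₁ G₂ he₁ he₂ hb₁ hb₂
end

section
/- For any graph G and n ≥ 3, the connectivity of the Kronecker product G × Kₙ equals min{n·κ(G), (n−1)·δ(G)}. -/
/-!
Upper bounds: if `S` is a minimum separating set of `G`, then `S × Kₙ` separates `G × Kₙ`, and a
vertex `u` of minimum degree gives the separating set `N(u) × (Kₙ - i)`, which isolates `(u, i)`.

Lower bound: split the complement of a separating set `T` of `G × Kₙ` into parts `X`, `Y` with no
edges between them and count `T` layer by layer, a layer being `{v} × Kₙ`. As `(v, i) ~ (w, j)`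
iff `v ~ w` and `i ≠ j`, an edge `vw` with `(v, i) ∈ X` and `(w, j) ∈ Y` forces `i = j`. If some
layer meets `X` twice and `Y` at all, or if no layer meets both sides and no layer meets `X` twice
(or the same with `X`, `Y` swapped), then some vertex has all its neighbouring layers meeting
`X ∪ Y` at most once, so `T` has `n - 1` points in each of them: `(n - 1) δ(G) ≤ |T|`. If a layer
meets `X` in `{a}` and `Y` in `{b}`, take a layer `q` of the more frequent of the two types
`({a}, {b})`, `({b}, {a})`: its neighbouring layers of the other type lack one point of `T` each,
which is paid for by the layers of the type of `q`, each containing `n - 2 ≥ 1` points of `T`. In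
the remaining case, the layers meeting `X` twice are separated in `G` from those meeting `Y`, and
symmetrically; averaging the two bounds on `κ(G)` so obtained gives `n κ(G) ≤ |T|`.
-/

open SimpleGraph

open Finset

section Separating

variable {V : Type*} (G : SimpleGraph V)

lemma isSeparating_of_forall_not_adj {S : Set V} {v w : V} (hv : v ∉ S) (hw : w ∉ S)
    (hvw : v ≠ w) (hiso : ∀ z ∉ S, ¬ G.Adj v z) : IsSeparating G S := by
  refine Or.inr fun hconn => ?_
  obtain ⟨p⟩ := hconn.preconnected ⟨v, hv⟩ ⟨w, hw⟩
  cases p with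
  | nil => exact hvw rfl
  | cons hadj _ => exact hiso _ (Subtype.prop _ : _ ∈ Sᶜ) hadj

lemma isSeparating_compl_union {A B : Set V} (hA : A.Nonempty) (hB : B.Nonempty)
    (hAB : Disjoint A B) (hadj : ∀ a ∈ A, ∀ b ∈ B, ¬ G.Adj a b) :
    IsSeparating G (A ∪ B)ᶜ := by
  refine Or.inr fun hconn => ?_
  rw [compl_compl] at hconn
  obtain ⟨a, ha⟩ := hA
  obtain ⟨b, hb⟩ := hB
  obtain ⟨p⟩ := hconn.preconnected ⟨a, .inl ha⟩ ⟨b, .inr hb⟩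
  have stays_in_A : ∀ {x y : ↥(A ∪ B)}, (G.induce (A ∪ B)).Walk x y → ↑x ∈ A → ↑y ∈ A := by
    intro x y p
    induction p with
    | nil => exact id
    | @cons _ z _ hxz _ ih =>
      exact fun hx => ih (z.2.resolve_right fun hz => hadj _ hx _ hz hxz)
  exact Set.disjoint_left.mp hAB (stays_in_A p ha) hb

lemma exists_of_not_connected_induce {s : Set V} (hs : s.Nonempty)
    (h : ¬ (G.induce s).Connected) :
    ∃ A B : Set V, A.Nonempty ∧ B.Nonempty ∧ A ∪ B = s ∧ Disjoint A B ∧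
      ∀ a ∈ A, ∀ b ∈ B, ¬ G.Adj a b := by
  have : Nonempty s := hs.to_subtype
  obtain ⟨x, y, hxy⟩ : ∃ x y : s, ¬ (G.induce s).Reachable x y := by
    by_contra! hall
    exact h ⟨hall⟩
  let A : Set V := {a | ∃ ha : a ∈ s, (G.induce s).Reachable x ⟨a, ha⟩}
  refine ⟨A, s \ A, ⟨x, x.2, .rfl⟩, ⟨y, y.2, fun ⟨_, hr⟩ => hxy hr⟩,
    Set.union_sdiff_cancel fun a ha => ha.1, Set.disjoint_sdiff_right, ?_⟩
  rintro a ⟨has, hr⟩ b ⟨hbs, hbA⟩ hab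
  have hab' : (G.induce s).Adj ⟨a, has⟩ ⟨b, hbs⟩ := hab
  exact hbA ⟨hbs, hr.trans hab'.reachable⟩

variable [Fintype V]

lemma kappa_le_ncard {S : Set V} (h : IsSeparating G S) : kappa G ≤ S.ncard :=
  Nat.sInf_le ⟨S, h, rfl⟩

lemma exists_isSeparating_ncard_eq_kappa : ∃ S, IsSeparating G S ∧ S.ncard = kappa G := by
  have hne : {k | ∃ S : Set V, IsSeparating G S ∧ S.ncard = k}.Nonempty :=
    ⟨_, Set.univ, Or.inr fun hconn => by simpa using hconn.nonempty, rfl⟩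
  exact Nat.sInf_mem hne

lemma kappa_lt_card [Nonempty V] : kappa G < Fintype.card V := by
  obtain ⟨v⟩ := ‹Nonempty V›
  have hsep : IsSeparating G {v}ᶜ := Or.inl (by simp)
  have hcard : ({v}ᶜ : Set V).ncard + 1 = Fintype.card V := by
    rw [← Set.ncard_singleton v, ← Nat.card_eq_fintype_card, add_comm, Set.ncard_add_ncard_compl]
  have := kappa_le_ncard G hsep
  omega

end Separating

lemma SimpleGraph.mul_minDegree_le_sum_neighborFinset {V : Type*} [Fintype V] (G : SimpleGraph V)
    [DecidableRel G.Adj] (u : V) {f : V → ℕ} {c : ℕ} (hf : ∀ w ∈ G.neighborFinset u, c ≤ f w) :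
    c * G.minDegree ≤ ∑ w ∈ G.neighborFinset u, f w :=
  calc c * G.minDegree ≤ ∑ _w ∈ G.neighborFinset u, c := by
        rw [sum_const, card_neighborFinset_eq_degree, smul_eq_mul, mul_comm]
        exact Nat.mul_le_mul_right _ (G.minDegree_le_degree u)
    _ ≤ ∑ w ∈ G.neighborFinset u, f w := sum_le_sum hf

section UpperBound

variable {α β : Type*} {G : SimpleGraph α} [Nontrivial β]

lemma IsSeparating.prod_univ (H : SimpleGraph β) {S : Set α} (h : IsSeparating G S) :
    IsSeparating (tensorProd G H) (S ×ˢ Set.univ) := by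
  obtain ⟨i, j, hij⟩ := exists_pair_ne β
  rcases h with hone | hdisc
  · obtain ⟨v, hv⟩ := Set.ncard_eq_one.mp hone
    have hvS : v ∉ S := (hv.symm ▸ rfl : v ∈ Sᶜ)
    refine isSeparating_of_forall_not_adj _ (v := (v, i)) (w := (v, j)) (by simpa) (by simpa)
      (by simpa) fun z hz hadj => G.loopless.irrefl v ?_
    have hz : z.1 ∈ Sᶜ := by simpa using hz
    rw [hv, Set.mem_singleton_iff] at hz
    simpa [hz] using hadj.1
  · refine Or.inr fun hconn => hdisc ?_
    let proj : (tensorProd G H).induce (S ×ˢ Set.univ)ᶜ →g G.induce Sᶜ :=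
      ⟨fun p => ⟨p.1.1, fun hp => p.2 ⟨hp, trivial⟩⟩, fun hadj => hadj.1⟩
    exact hconn.map proj fun v => ⟨⟨(v.1, i), fun hv => v.2 hv.1⟩, rfl⟩

variable (G) (H : SimpleGraph β)

lemma isSeparating_neighborSet_prod_neighborSet (u : α) (i : β) :
    IsSeparating (tensorProd G H) (G.neighborSet u ×ˢ H.neighborSet i) := by
  obtain ⟨j, hji⟩ := exists_ne i
  refine isSeparating_of_forall_not_adj _ (v := (u, i)) (w := (u, j)) (by simp) (by simp)
    (by simpa using hji.symm) fun z hz hadj => hz ⟨hadj.1, hadj.2⟩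

variable [Fintype α] [Fintype β]

lemma kappa_tensorProd_le_kappa_mul : kappa (tensorProd G H) ≤ kappa G * Fintype.card β := by
  obtain ⟨S, hS, hcard⟩ := exists_isSeparating_ncard_eq_kappa G
  simpa [Set.ncard_prod, hcard] using kappa_le_ncard _ (hS.prod_univ H)

lemma kappa_tensorProd_top_le_mul_minDegree [Nonempty α] [DecidableRel G.Adj] :
    kappa (tensorProd G (⊤ : SimpleGraph β)) ≤ (Fintype.card β - 1) * G.minDegree := by
  obtain ⟨u, hu⟩ := G.exists_minimal_degree_vertex
  obtain ⟨i⟩ := ‹Nontrivial β›.to_nonempty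
  have hdeg : (G.neighborSet u).ncard = G.degree u := by
    rw [← card_neighborFinset_eq_degree, ← Set.ncard_coe_finset, coe_neighborFinset]
  have hle := kappa_le_ncard _ (isSeparating_neighborSet_prod_neighborSet G ⊤ u i)
  rwa [Set.ncard_prod, hdeg, neighborSet_top, Set.ncard_compl, Set.ncard_singleton,
    Nat.card_eq_fintype_card, mul_comm, ← hu] at hle

end UpperBound

structure IsSeparation {V : Type*} (K : SimpleGraph V) (T X Y : Set V) : Prop where
  union_eq : X ∪ Y = Tᶜ
  disjoint : Disjoint X Y
  not_adj : ∀ p ∈ X, ∀ q ∈ Y, ¬ K.Adj p q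

lemma IsSeparation.symm {V : Type*} {K : SimpleGraph V} {T X Y : Set V}
    (h : IsSeparation K T X Y) : IsSeparation K T Y X :=
  ⟨Set.union_comm X Y ▸ h.union_eq, h.disjoint.symm,
    fun p hp q hq hadj => h.not_adj q hq p hp hadj.symm⟩

lemma IsSeparating.ncard_compl_le_one_or_exists_isSeparation {V : Type*} {K : SimpleGraph V}
    {T : Set V} (h : IsSeparating K T) :
    Tᶜ.ncard ≤ 1 ∨ ∃ X Y, X.Nonempty ∧ Y.Nonempty ∧ IsSeparation K T X Y := by
  rcases Tᶜ.eq_empty_or_nonempty with hempty | hne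
  · simp [hempty]
  rcases h with hone | hdisc
  · exact Or.inl hone.le
  obtain ⟨X, Y, hX, hY, hunion, hdisj, hadj⟩ := exists_of_not_connected_induce K hne hdisc
  exact Or.inr ⟨X, Y, hX, hY, hunion, hdisj, hadj⟩

lemma sum_ncard_preimage_mk_le {α β : Type*} [Fintype α] [Fintype β] (T : Set (α × β))
    (U : Finset α) : ∑ u ∈ U, (Prod.mk u ⁻¹' T).ncard ≤ T.ncard := by
  classical
  calc ∑ u ∈ U, (Prod.mk u ⁻¹' T).ncard
      = ∑ u ∈ U, ((U ×ˢ univ).filter (· ∈ T) |>.filter (·.1 = u)).card := by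
        refine sum_congr rfl fun u hu => ?_
        rw [← Set.ncard_image_of_injective _ (Prod.mk_right_injective u), ← Set.ncard_coe_finset]
        congr 1
        ext ⟨v, i⟩
        simp only [Set.mem_image, Set.mem_preimage, Prod.mk.injEq, coe_filter, Set.mem_ofPred_eq]
        grind
    _ = ((U ×ˢ univ).filter (· ∈ T)).card :=
        (card_eq_sum_card_fiberwise fun p hp => (mem_product.mp (mem_filter.mp hp).1).1).symm
    _ ≤ T.ncard := by
        rw [← Set.ncard_coe_finset]
        exact Set.ncard_le_ncard (by intro p; simp)

def layersOfType {α β : Type*} (X Y : Set (α × β)) (a b : β) : Set α :=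
  {v | Prod.mk v ⁻¹' X = {a} ∧ Prod.mk v ⁻¹' Y = {b}}

section layersOfType

variable {α β : Type*} {X Y : Set (α × β)} {a b : β} {v : α}

lemma mk_mem_left_of_mem_layersOfType (hv : v ∈ layersOfType X Y a b) : (v, a) ∈ X :=
  show a ∈ Prod.mk v ⁻¹' X from hv.1 ▸ rfl

lemma mk_mem_right_of_mem_layersOfType (hv : v ∈ layersOfType X Y a b) : (v, b) ∈ Y :=
  show b ∈ Prod.mk v ⁻¹' Y from hv.2 ▸ rfl

end layersOfType

namespace IsSeparation

variable {α β : Type*} {G : SimpleGraph α} {T X Y : Set (α × β)}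
  (h : IsSeparation (tensorProd G ⊤) T X Y)
include h

lemma eq_of_adj {v w : α} {i j : β} (hadj : G.Adj v w) (hv : (v, i) ∈ X) (hw : (w, j) ∈ Y) :
    i = j :=
  by_contra fun hij => h.not_adj _ hv _ hw ⟨hadj, hij⟩

lemma preimage_mk_right_subset {v w : α} {i : β} (hadj : G.Adj v w) (hv : (v, i) ∈ X) :
    Prod.mk w ⁻¹' Y ⊆ {i} :=
  fun _ hj => (h.eq_of_adj hadj hv hj).symm

lemma preimage_mk_left_subset {v w : α} {j : β} (hadj : G.Adj v w) (hw : (w, j) ∈ Y) :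
    Prod.mk v ⁻¹' X ⊆ {j} :=
  fun _ hi => h.eq_of_adj hadj hi hw

lemma not_adj_of_mem_layersOfType {a b : β} {v w : α} (hab : a ≠ b)
    (hv : v ∈ layersOfType X Y a b) (hw : w ∈ layersOfType X Y a b) : ¬ G.Adj v w :=
  fun hadj => hab (h.eq_of_adj hadj (mk_mem_left_of_mem_layersOfType hv)
    (mk_mem_right_of_mem_layersOfType hw))

lemma kappa_le_ncard_of_nontrivial [Fintype α]
    (hsplit : ∀ u, Prod.mk u ⁻¹' X = ∅ ∨ Prod.mk u ⁻¹' Y = ∅)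
    (hX : ∃ u, (Prod.mk u ⁻¹' X).Nontrivial) (hY : ∃ u, (Prod.mk u ⁻¹' Y).Nonempty) :
    kappa G ≤ {v | (Prod.mk v ⁻¹' X).Subsingleton ∧ Prod.mk v ⁻¹' Y = ∅}.ncard := by
  set A := {v | (Prod.mk v ⁻¹' X).Nontrivial}
  set B := {v | (Prod.mk v ⁻¹' Y).Nonempty}
  have hAB : Disjoint A B := Set.disjoint_left.mpr fun v hvA hvB =>
    (hsplit v).elim hvA.nonempty.ne_empty hvB.ne_empty
  have hadj : ∀ v ∈ A, ∀ w ∈ B, ¬ G.Adj v w := by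
    rintro v ⟨c, hc, c', hc', hcc'⟩ w ⟨j, hj⟩ hvw
    exact hcc' ((h.eq_of_adj hvw hc hj).trans (h.eq_of_adj hvw hc' hj).symm)
  have hsep := isSeparating_compl_union G (A := A) (B := B) hX hY hAB hadj
  refine (_root_.kappa_le_ncard G hsep).trans (Set.ncard_le_ncard fun v hv => ?_)
  rw [Set.mem_compl_iff, Set.mem_union, not_or] at hv
  exact ⟨Set.not_nontrivial_iff.mp hv.1, Set.not_nonempty_iff_eq_empty.mp hv.2⟩

variable [Fintype β]

lemma ncard_preimage_mk_add (v : α) :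
    (Prod.mk v ⁻¹' X).ncard + (Prod.mk v ⁻¹' Y).ncard + (Prod.mk v ⁻¹' T).ncard =
      Fintype.card β := by
  rw [← Set.ncard_union_eq (h.disjoint.preimage _), ← Set.preimage_union, h.union_eq,
    Set.preimage_compl, add_comm, Set.ncard_add_ncard_compl, Nat.card_eq_fintype_card]

lemma ncard_preimage_mk_add_two {v : α} {a b : β} (hv : v ∈ layersOfType X Y a b) :
    (Prod.mk v ⁻¹' T).ncard + 2 = Fintype.card β := by
  have := h.ncard_preimage_mk_add v
  simp only [hv.1, hv.2, Set.ncard_singleton] at this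
  omega

lemma card_sub_one_le_ncard_preimage_mk_of_adj {a b : β} {q w : α}
    (hq : q ∈ layersOfType X Y b a) (hadj : G.Adj q w) (hw : w ∉ layersOfType X Y a b) :
    Fintype.card β - 1 ≤ (Prod.mk w ⁻¹' T).ncard := by
  have key := h.ncard_preimage_mk_add w
  rcases Set.subset_singleton_iff_eq.mp (h.preimage_mk_left_subset hadj.symm
      (mk_mem_right_of_mem_layersOfType hq)) with hx | hx <;>
    rcases Set.subset_singleton_iff_eq.mp (h.preimage_mk_right_subset hadj
      (mk_mem_left_of_mem_layersOfType hq)) with hy | hy <;>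
    simp only [hx, hy, Set.ncard_empty, Set.ncard_singleton] at key
  · omega
  · omega
  · omega
  · exact absurd ⟨hx, hy⟩ hw

variable [Fintype α]

lemma mul_kappa_le (hn : 2 ≤ Fintype.card β)
    (hsplit : ∀ u, Prod.mk u ⁻¹' X = ∅ ∨ Prod.mk u ⁻¹' Y = ∅)
    (hX : ∃ u, (Prod.mk u ⁻¹' X).Nontrivial) (hY : ∃ u, (Prod.mk u ⁻¹' Y).Nontrivial) :
    Fintype.card β * kappa G ≤ T.ncard := by
  classical
  set n := Fintype.card β
  set C₁ := {v | (Prod.mk v ⁻¹' X).Subsingleton ∧ Prod.mk v ⁻¹' Y = ∅}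
  set C₂ := {v | (Prod.mk v ⁻¹' Y).Subsingleton ∧ Prod.mk v ⁻¹' X = ∅}
  have h₁ : kappa G ≤ C₁.ncard :=
    h.kappa_le_ncard_of_nontrivial hsplit hX (hY.imp fun _ => Set.Nontrivial.nonempty)
  have h₂ : kappa G ≤ C₂.ncard := h.symm.kappa_le_ncard_of_nontrivial
    (fun u => (hsplit u).symm) hY (hX.imp fun _ => Set.Nontrivial.nonempty)
  have hlayer : ∀ v, (if v ∈ C₁ then n else 0) + (if v ∈ C₂ then n else 0) ≤
      2 * (Prod.mk v ⁻¹' T).ncard := by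
    intro v
    have key := h.ncard_preimage_mk_add v
    split_ifs with hv₁ hv₂ hv₂
    · simp only [hv₁.2, hv₂.2, Set.ncard_empty] at key
      omega
    · have := Set.ncard_le_one_iff_subsingleton.mpr hv₁.1
      simp only [hv₁.2, Set.ncard_empty] at key
      omega
    · have := Set.ncard_le_one_iff_subsingleton.mpr hv₂.1
      simp only [hv₂.2, Set.ncard_empty] at key
      omega
    · omega
  have hsum : n * C₁.ncard + n * C₂.ncard ≤ 2 * T.ncard :=
    calc n * C₁.ncard + n * C₂.ncard
        = ∑ v, ((if v ∈ C₁ then n else 0) + (if v ∈ C₂ then n else 0)) := by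
          rw [sum_add_distrib, sum_ite, sum_ite]
          simp [Set.ncard_eq_toFinset_card', mul_comm]
      _ ≤ ∑ v, 2 * (Prod.mk v ⁻¹' T).ncard := sum_le_sum fun v _ => hlayer v
      _ ≤ 2 * T.ncard := by
          rw [← mul_sum]
          exact Nat.mul_le_mul_left 2 (sum_ncard_preimage_mk_le T univ)
  have : 2 * (n * kappa G) ≤ 2 * T.ncard :=
    calc 2 * (n * kappa G) = n * kappa G + n * kappa G := two_mul _
      _ ≤ n * C₁.ncard + n * C₂.ncard := by gcongr
      _ ≤ 2 * T.ncard := hsum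
  omega

variable [DecidableRel G.Adj]

lemma mul_minDegree_le_of_forall_adj (u : α)
    (hu : ∀ w, G.Adj u w → (Prod.mk w ⁻¹' X).ncard + (Prod.mk w ⁻¹' Y).ncard ≤ 1) :
    (Fintype.card β - 1) * G.minDegree ≤ T.ncard :=
  calc (Fintype.card β - 1) * G.minDegree
      ≤ ∑ w ∈ G.neighborFinset u, (Prod.mk w ⁻¹' T).ncard := by
        refine G.mul_minDegree_le_sum_neighborFinset u fun w hw => ?_
        have := h.ncard_preimage_mk_add w
        have := hu w ((mem_neighborFinset G u w).mp hw)
        omega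
    _ ≤ T.ncard := sum_ncard_preimage_mk_le T _

lemma mul_minDegree_le_of_nontrivial {u : α} (hx : (Prod.mk u ⁻¹' X).Nontrivial)
    (hy : (Prod.mk u ⁻¹' Y).Nonempty) : (Fintype.card β - 1) * G.minDegree ≤ T.ncard := by
  obtain ⟨c, hc, c', hc', hcc'⟩ := hx
  obtain ⟨j, hj⟩ := hy
  refine h.mul_minDegree_le_of_forall_adj u fun w hadj => ?_
  have hYw : Prod.mk w ⁻¹' Y = ∅ := Set.eq_empty_of_forall_notMem fun k hk =>
    hcc' ((h.preimage_mk_right_subset hadj hc hk).symm.trans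
      (h.preimage_mk_right_subset hadj hc' hk))
  have hXw := Set.ncard_le_ncard (h.preimage_mk_left_subset hadj.symm hj)
  simpa [hYw] using hXw

lemma mul_minDegree_le_of_subsingleton
    (hsplit : ∀ u, Prod.mk u ⁻¹' X = ∅ ∨ Prod.mk u ⁻¹' Y = ∅)
    (hX : ∀ u, (Prod.mk u ⁻¹' X).Subsingleton) (hne : X.Nonempty) :
    (Fintype.card β - 1) * G.minDegree ≤ T.ncard := by
  obtain ⟨⟨u, c⟩, hc⟩ := hne
  refine h.mul_minDegree_le_of_forall_adj u fun w hadj => ?_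
  have hXw : (Prod.mk w ⁻¹' X).ncard ≤ 1 := Set.ncard_le_one_iff_subsingleton.mpr (hX w)
  have hYw := Set.ncard_le_ncard (h.preimage_mk_right_subset hadj hc)
  rw [Set.ncard_singleton] at hYw
  rcases hsplit w with hw | hw <;> rw [hw, Set.ncard_empty] <;> omega

lemma mul_minDegree_le_of_ncard_layersOfType_le (hn : 3 ≤ Fintype.card β) {a b : β}
    (hab : a ≠ b) (hQ : (layersOfType X Y b a).Nonempty)
    (hle : (layersOfType X Y a b).ncard ≤ (layersOfType X Y b a).ncard) :
    (Fintype.card β - 1) * G.minDegree ≤ T.ncard := by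
  classical
  obtain ⟨q, hq⟩ := hQ
  set P := layersOfType X Y a b
  set Q := layersOfType X Y b a
  have hneigh : ∀ w ∈ G.neighborFinset q,
      Fintype.card β - 1 ≤ (Prod.mk w ⁻¹' T).ncard + if w ∈ P then 1 else 0 := by
    intro w hw
    by_cases hwP : w ∈ P
    · have := h.ncard_preimage_mk_add_two hwP
      simp only [hwP, if_true]
      omega
    · simpa only [hwP, if_false, add_zero] using
        h.card_sub_one_le_ncard_preimage_mk_of_adj hq ((mem_neighborFinset G q w).mp hw) hwP
  have hdisj : Disjoint (G.neighborFinset q) Q.toFinset :=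
    Finset.disjoint_left.mpr fun w hw hwQ => h.not_adj_of_mem_layersOfType hab.symm hq
      (Set.mem_toFinset.mp hwQ) ((mem_neighborFinset G q w).mp hw)
  have hP : P.ncard ≤ ∑ v ∈ Q.toFinset, (Prod.mk v ⁻¹' T).ncard :=
    calc P.ncard ≤ ∑ _v ∈ Q.toFinset, 1 := by simpa [Set.ncard_eq_toFinset_card'] using hle
      _ ≤ _ := sum_le_sum fun v hv => by
        have := h.ncard_preimage_mk_add_two (Set.mem_toFinset.mp hv)
        omega
  calc (Fintype.card β - 1) * G.minDegree
      ≤ ∑ w ∈ G.neighborFinset q, ((Prod.mk w ⁻¹' T).ncard + if w ∈ P then 1 else 0) :=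
        G.mul_minDegree_le_sum_neighborFinset q hneigh
    _ = ∑ w ∈ G.neighborFinset q, (Prod.mk w ⁻¹' T).ncard +
          ((G.neighborFinset q).filter (· ∈ P)).card := by
        rw [sum_add_distrib, sum_boole, Nat.cast_id]
    _ ≤ ∑ w ∈ G.neighborFinset q, (Prod.mk w ⁻¹' T).ncard + P.ncard := by
        gcongr
        rw [← Set.ncard_coe_finset]
        exact Set.ncard_le_ncard fun w hw => (mem_filter.mp (mem_coe.mp hw)).2
    _ ≤ ∑ w ∈ G.neighborFinset q ∪ Q.toFinset, (Prod.mk w ⁻¹' T).ncard := by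
        rw [sum_union hdisj]
        gcongr
    _ ≤ T.ncard := sum_ncard_preimage_mk_le T _

lemma mul_minDegree_le_of_nonempty (hn : 3 ≤ Fintype.card β) {u : α}
    (hx : (Prod.mk u ⁻¹' X).Nonempty) (hy : (Prod.mk u ⁻¹' Y).Nonempty) :
    (Fintype.card β - 1) * G.minDegree ≤ T.ncard := by
  rcases hx.exists_eq_singleton_or_nontrivial with ⟨a, ha⟩ | hx
  · rcases hy.exists_eq_singleton_or_nontrivial with ⟨b, hb⟩ | hy
    · have hu : u ∈ layersOfType X Y a b := ⟨ha, hb⟩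
      have hab : a ≠ b := by
        rintro rfl
        exact Set.disjoint_left.mp h.disjoint (mk_mem_left_of_mem_layersOfType hu)
          (mk_mem_right_of_mem_layersOfType hu)
      rcases le_total (layersOfType X Y a b).ncard (layersOfType X Y b a).ncard with hle | hle
      · refine h.mul_minDegree_le_of_ncard_layersOfType_le hn hab ?_ hle
        have hpos := (Set.ncard_pos (Set.toFinite _)).mpr ⟨u, hu⟩
        exact Set.nonempty_of_ncard_ne_zero (hpos.trans_le hle).ne'
      · exact h.mul_minDegree_le_of_ncard_layersOfType_le hn hab.symm ⟨u, hu⟩ hle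
    · exact h.symm.mul_minDegree_le_of_nontrivial hy hx
  · exact h.mul_minDegree_le_of_nontrivial hx hy

lemma min_le_ncard (hn : 3 ≤ Fintype.card β) (hX : X.Nonempty) (hY : Y.Nonempty) :
    min (Fintype.card β * kappa G) ((Fintype.card β - 1) * G.minDegree) ≤ T.ncard := by
  by_cases hboth : ∃ u, (Prod.mk u ⁻¹' X).Nonempty ∧ (Prod.mk u ⁻¹' Y).Nonempty
  · obtain ⟨u, hxu, hyu⟩ := hboth
    exact min_le_of_right_le (h.mul_minDegree_le_of_nonempty hn hxu hyu)
  have hsplit : ∀ u, Prod.mk u ⁻¹' X = ∅ ∨ Prod.mk u ⁻¹' Y = ∅ := fun u => by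
    simpa only [not_and_or, Set.not_nonempty_iff_eq_empty] using not_exists.mp hboth u
  by_cases hX2 : ∃ u, (Prod.mk u ⁻¹' X).Nontrivial
  · by_cases hY2 : ∃ u, (Prod.mk u ⁻¹' Y).Nontrivial
    · exact min_le_of_left_le (h.mul_kappa_le (by omega) hsplit hX2 hY2)
    · refine min_le_of_right_le (h.symm.mul_minDegree_le_of_subsingleton
        (fun u => (hsplit u).symm) ?_ hY)
      simpa only [not_exists, Set.not_nontrivial_iff] using hY2
  · refine min_le_of_right_le (h.mul_minDegree_le_of_subsingleton hsplit ?_ hX)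
    simpa only [not_exists, Set.not_nontrivial_iff] using hX2

end IsSeparation

lemma min_le_ncard_of_isSeparating {α β : Type*} [Fintype α] [Nonempty α] [Fintype β]
    {G : SimpleGraph α} [DecidableRel G.Adj] {T : Set (α × β)} (hn : 3 ≤ Fintype.card β)
    (hT : IsSeparating (tensorProd G ⊤) T) :
    min (Fintype.card β * kappa G) ((Fintype.card β - 1) * G.minDegree) ≤ T.ncard := by
  rcases hT.ncard_compl_le_one_or_exists_isSeparation with hle | ⟨X, Y, hX, hY, h⟩
  · refine min_le_of_left_le ?_
    have hcard : T.ncard + Tᶜ.ncard = Fintype.card α * Fintype.card β := by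
      rw [Set.ncard_add_ncard_compl, Nat.card_eq_fintype_card, Fintype.card_prod]
    have hκ : (kappa G + 1) * Fintype.card β ≤ Fintype.card α * Fintype.card β :=
      Nat.mul_le_mul_right _ (kappa_lt_card G)
    rw [add_mul, one_mul, mul_comm] at hκ
    omega
  · exact h.min_le_ncard hn hX hY

theorem stmt7 {α : Type*} [Fintype α] [Nonempty α] (G : SimpleGraph α) [DecidableRel G.Adj]
    (n : ℕ) (hn : 3 ≤ n) :
    kappa (tensorProd G (⊤ : SimpleGraph (Fin n))) =
      min (n * kappa G) ((n - 1) * G.minDegree) := by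
  have : Nontrivial (Fin n) := Fin.nontrivial_iff_two_le.mpr (by omega)
  refine le_antisymm (le_min ?_ ?_) ?_
  · simpa [mul_comm] using kappa_tensorProd_le_kappa_mul G (⊤ : SimpleGraph (Fin n))
  · simpa using kappa_tensorProd_top_le_mul_minDegree G (β := Fin n)
  · obtain ⟨T, hT, hcard⟩ :=
      exists_isSeparating_ncard_eq_kappa (tensorProd G (⊤ : SimpleGraph (Fin n)))
    simpa [hcard] using min_le_ncard_of_isSeparating (by simpa using hn) hT
end
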